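/- arXiv:2201.12638 — 5 statements merged into one kernel-verified Lean document; each statement's English description precedes it below -/
import Mathlib

section
/- Assume in addition that z is bijective. Then for every integer i ≥ 0, ker(x^{i+1}) = N_0 + N_1 + ⋯ + N_i, and this sum of subspaces is direct: ker(x^{i+1}) = ⊕_{j=0}^{i} y^j(ker x). -/
section aux
variable {k M : Type*} [Field k] [CharZero k] [AddCommGroup M] [Module k M]
variable (x y z : Module.End k M)

lemma pow_apply_comm (x : Module.End k M) (m : ℕ) (v : M) :
    x ((x ^ m) v) = (x ^ m) (x v) := by
  rw [← Module.End.mul_apply, ← pow_succ', pow_succ, Module.End.mul_apply]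

lemma app_comm (hxy : x * y - y * x = z) (hyz : y * z = z * y) :
    ∀ (n : ℕ) (u : M), x ((y ^ (n+1)) u) = (y ^ (n+1)) (x u) + ((n+1 : ℕ) : k) • z ((y ^ n) u) := by
  have hxyu : ∀ u : M, x (y u) = y (x u) + z u := by
    intro u
    have h := congrArg (fun f : Module.End k M => f u) hxy
    simp only [LinearMap.sub_apply, Module.End.mul_apply] at h
    rw [sub_eq_iff_eq_add] at h
    rw [h, add_comm]
  have hyzpow : ∀ (n : ℕ) (u : M), (y ^ n) (z u) = z ((y ^ n) u) := by
    intro n u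
    have h : y ^ n * z = z * y ^ n := (Commute.pow_left hyz n)
    have := congrArg (fun f : Module.End k M => f u) h
    simpa [Module.End.mul_apply] using this
  intro n
  induction n with
  | zero => intro u; simpa using hxyu u
  | succ n ih =>
    intro u
    have h1 : (y ^ (n+2)) u = (y ^ (n+1)) (y u) := by
      rw [pow_succ]; simp [Module.End.mul_apply]
    have h2 : (y ^ (n+2)) (x u) = (y ^ (n+1)) (y (x u)) := by
      rw [pow_succ]; simp [Module.End.mul_apply]
    rw [h1, ih (y u), hxyu u, map_add, h2]
    have h3 : (y ^ (n+1)) (z u) = z ((y ^ (n+1)) u) := hyzpow (n+1) u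
    rw [h3]
    have h4 : (y ^ n) (y u) = (y ^ (n+1)) u := by
      rw [pow_succ]; simp [Module.End.mul_apply]
    rw [h4]
    have hc : ((n+1+1 : ℕ) : k) = ((n+1 : ℕ) : k) + 1 := by push_cast; ring
    rw [hc, add_smul, one_smul]
    abel

lemma app_factorial (hxy : x * y - y * x = z) (hxz : x * z = z * x) (hyz : y * z = z * y) :
    ∀ (n : ℕ) (u : M), x u = 0 → (x ^ n) ((y ^ n) u) = ((n.factorial : ℕ) : k) • (z ^ n) u := by
  have hxzpow : ∀ (n : ℕ) (u : M), (x ^ n) (z u) = z ((x ^ n) u) := by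
    intro n u
    have h : x ^ n * z = z * x ^ n := Commute.pow_left hxz n
    have := congrArg (fun f : Module.End k M => f u) h
    simpa [Module.End.mul_apply] using this
  intro n
  induction n with
  | zero => intro u hu; simp
  | succ n ih =>
    intro u hu
    have h1 : (x ^ (n+1)) ((y ^ (n+1)) u) = (x ^ n) (x ((y ^ (n+1)) u)) := by
      rw [pow_succ']; simp [Module.End.mul_apply, pow_apply_comm]
    rw [h1, app_comm x y z hxy hyz n u, hu, map_zero, zero_add, map_smul, hxzpow,
      ih u hu, map_smul, smul_smul]
    have h2 : z ((z ^ n) u) = (z ^ (n+1)) u := by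
      rw [pow_succ']; simp [Module.End.mul_apply]

    rw [h2, Nat.factorial_succ]
    push_cast
    ring_nf

lemma app_ker (hxy : x * y - y * x = z) (hxz : x * z = z * x) (hyz : y * z = z * y) :
    ∀ (n : ℕ) (u : M), x u = 0 → (x ^ (n+1)) ((y ^ n) u) = 0 := by
  intro n u hu
  have h1 : (x ^ (n+1)) ((y ^ n) u) = x ((x ^ n) ((y ^ n) u)) := by
    rw [pow_succ]; simp [Module.End.mul_apply, pow_apply_comm]
  rw [h1, app_factorial x y z hxy hxz hyz n u hu, map_smul]
  have hxzpow : x ((z ^ n) u) = (z ^ n) (x u) := by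
    have h : x * z ^ n = z ^ n * x := Commute.pow_right hxz n
    have := congrArg (fun f : Module.End k M => f u) h
    simpa [Module.End.mul_apply] using this
  rw [hxzpow, hu, map_zero, smul_zero]

end aux

/-- Key Lemma: if moreover `z` is bijective, then for every `i ≥ 0`,
`ker (x^(i+1)) = N_0 + ⋯ + N_i` where `N_j = y^j (ker x)`, and the family of
subspaces `(N_j)` is independent (the sum is direct). -/
theorem stmt3 {k M : Type*} [Field k] [CharZero k] [AddCommGroup M] [Module k M]
    (x y z : Module.End k M)
    (hxy : x * y - y * x = z) (hxz : x * z = z * x) (hyz : y * z = z * y)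
    (hz : Function.Bijective z) :
    (∀ i : ℕ, LinearMap.ker (x ^ (i + 1)) =
        ⨆ j ∈ Finset.range (i + 1), Submodule.map (y ^ j) (LinearMap.ker x))
    ∧ iSupIndep
        (fun j : ℕ => Submodule.map (y ^ j) (LinearMap.ker x)) := by
  classical
  set N : ℕ → Submodule k M := fun j => Submodule.map (y ^ j) (LinearMap.ker x) with hN
  -- the inverse of z
  set e : M ≃ₗ[k] M := LinearEquiv.ofBijective z hz with he
  have hze : ∀ m : M, z m = e m := fun m => rfl
  have hw1 : ∀ m : M, z (e.symm m) = m := fun m => by rw [hze]; exact e.apply_symm_apply m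
  have hw2 : ∀ m : M, e.symm (z m) = m := fun m => by rw [hze]; exact e.symm_apply_apply m
  have hwx : ∀ m : M, x (e.symm m) = e.symm (x m) := by
    intro m
    apply hz.injective
    rw [hw1]
    have h := congrArg (fun f : Module.End k M => f (e.symm m)) hxz
    simp only [Module.End.mul_apply] at h
    rw [← h, hw1]
  -- z^n is injective on M, pointwise form
  have hzn : ∀ (n : ℕ) (u : M), (z ^ n) u = 0 → u = 0 := by
    intro n
    induction n with
    | zero => intro u hu; simpa using hu
    | succ n ih =>
      intro u hu
      rw [pow_succ, Module.End.mul_apply] at hu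
      exact hz.injective (by rw [ih (z u) hu, map_zero])
  -- each N j is inside ker (x ^ (j+1))
  have hNker : ∀ (i j : ℕ), j ≤ i → N j ≤ LinearMap.ker (x ^ (i + 1)) := by
    intro i j hji m hm
    obtain ⟨u, hu, rfl⟩ := hm
    simp only [SetLike.mem_coe, LinearMap.mem_ker] at hu ⊢
    obtain ⟨c, hc⟩ : ∃ c, i + 1 = c + (j + 1) := ⟨i - j, by omega⟩
    rw [hc, pow_add, Module.End.mul_apply, app_ker x y z hxy hxz hyz j u hu, map_zero]
  -- the lifting step
  have hlift : ∀ (j : ℕ) (u : M), x u = 0 →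
      ∃ t : M, x t = 0 ∧ x ((y ^ (j + 1)) t) = (y ^ j) u := by
    intro j u hu
    refine ⟨(((j : k) + 1)⁻¹) • e.symm u, ?_, ?_⟩
    · rw [map_smul, hwx, hu, map_zero, smul_zero]
    · have ht0 : x ((((j : k) + 1)⁻¹) • e.symm u) = 0 := by
        rw [map_smul, hwx, hu, map_zero, smul_zero]
      rw [app_comm x y z hxy hyz j, ht0, map_zero, zero_add, map_smul, map_smul, smul_smul]
      have hj1 : ((j + 1 : ℕ) : k) ≠ 0 := by exact_mod_cast Nat.succ_ne_zero j
      have : ((j + 1 : ℕ) : k) * ((j : k) + 1)⁻¹ = 1 := by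
        push_cast at hj1 ⊢
        exact mul_inv_cancel₀ hj1
      rw [this, one_smul]
      -- z ((y ^ j) (e.symm u)) = (y ^ j) u
      have hyzpow : (y ^ j) * z = z * (y ^ j) := Commute.pow_left hyz j
      have h := congrArg (fun f : Module.End k M => f (e.symm u)) hyzpow
      simp only [Module.End.mul_apply] at h
      rw [← h, hw1]
  have part1 : ∀ i : ℕ, LinearMap.ker (x ^ (i + 1)) =
      ⨆ j ∈ Finset.range (i + 1), N j := by
    intro i
    induction i with
    | zero =>
      have hsup0 : (⨆ j ∈ Finset.range (0 + 1), N j) = N 0 := by simp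
      rw [zero_add, pow_one, hsup0]
      show LinearMap.ker x = Submodule.map (y ^ 0) (LinearMap.ker x)
      rw [pow_zero, Module.End.one_eq_id, Submodule.map_id]
    | succ i ih =>
      apply le_antisymm
      · intro v hv
        rw [LinearMap.mem_ker] at hv
        have hxv : x v ∈ LinearMap.ker (x ^ (i + 1)) := by
          rw [LinearMap.mem_ker, ← Module.End.mul_apply, ← pow_succ, hv]
        rw [ih] at hxv
        -- x v is in the image under x of ⨆ j ∈ range (i+1), N (j+1)
        have hsub : (⨆ j ∈ Finset.range (i + 1), N j) ≤
            Submodule.map x (⨆ j ∈ Finset.range (i + 1), N (j + 1)) := by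
          refine iSup₂_le fun j hj => ?_
          rintro m ⟨u, hu, rfl⟩
          simp only [SetLike.mem_coe, LinearMap.mem_ker] at hu
          obtain ⟨t, ht0, ht⟩ := hlift j u hu
          exact ⟨(y ^ (j + 1)) t, (le_iSup₂ (f := fun j _ => N (j+1)) j hj)
            ⟨t, LinearMap.mem_ker.mpr ht0, rfl⟩, ht⟩
        obtain ⟨v', hv'S, hv'x⟩ := hsub hxv
        have hdiff : v - v' ∈ N 0 := by
          refine ⟨v - v', ?_, by simp⟩
          simp only [SetLike.mem_coe, LinearMap.mem_ker, map_sub, hv'x, sub_self]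
        have h0 : N 0 ≤ ⨆ j ∈ Finset.range (i + 2), N j :=
          le_iSup₂ (f := fun j _ => N j) 0 (Finset.mem_range.mpr (by omega))
        have hS : (⨆ j ∈ Finset.range (i + 1), N (j + 1)) ≤
            ⨆ j ∈ Finset.range (i + 2), N j := by
          refine iSup₂_le fun j hj => ?_
          rw [Finset.mem_range] at hj
          exact le_iSup₂ (f := fun j _ => N j) (j + 1) (Finset.mem_range.mpr (by omega))
        have : v = (v - v') + v' := by abel
        rw [this]
        exact Submodule.add_mem _ (h0 hdiff) (hS hv'S)
      · refine iSup₂_le fun j hj => ?_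
        rw [Finset.mem_range] at hj
        exact hNker (i + 1) j (by omega)
  refine ⟨part1, ?_⟩
  apply iSupIndep_of_dfinsupp_lsum_injective
  have key : ∀ f : Π₀ j : ℕ, ↥(N j),
      DFinsupp.lsum ℕ (M := fun j => ↥(N j)) (fun j => (N j).subtype) f = 0 → f = 0 := by
    intro f hf
    by_contra hne
    have hsupp : f.support.Nonempty := by
      obtain ⟨i, hi⟩ := DFunLike.ne_iff.mp hne
      exact ⟨i, DFinsupp.mem_support_iff.mpr hi⟩
    set n := f.support.max' hsupp with hn
    have hsum : ∑ j ∈ f.support, ((f j : M)) = 0 := by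
      rw [DFinsupp.lsum_apply_apply, DFinsupp.sumAddHom_apply] at hf
      simpa [DFinsupp.sum] using hf
    have hsum2 : ∑ j ∈ f.support, (x ^ n) ((f j : M)) = 0 := by
      rw [← map_sum, hsum, map_zero]
    have hterm : ∀ j ∈ f.support, j ≠ n → (x ^ n) ((f j : M)) = 0 := by
      intro j hj hjn
      have hjlt : j < n := lt_of_le_of_ne (f.support.le_max' j hj) hjn
      obtain ⟨u, hu, hyu⟩ := (f j).2
      simp only [SetLike.mem_coe, LinearMap.mem_ker] at hu
      obtain ⟨c, hc⟩ : ∃ c, n = c + (j + 1) := ⟨n - (j + 1), by omega⟩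
      rw [← hyu, hc, pow_add, Module.End.mul_apply,
        app_ker x y z hxy hxz hyz j u hu, map_zero]
    have hmem : n ∈ f.support := f.support.max'_mem hsupp
    rw [Finset.sum_eq_single_of_mem n hmem hterm] at hsum2
    obtain ⟨u, hu, hyu⟩ := (f n).2
    simp only [SetLike.mem_coe, LinearMap.mem_ker] at hu
    rw [← hyu, app_factorial x y z hxy hxz hyz n u hu] at hsum2
    have hfac : ((n.factorial : ℕ) : k) ≠ 0 := by
      exact_mod_cast n.factorial_ne_zero
    have hzu : (z ^ n) u = 0 := by
      rcases smul_eq_zero.mp hsum2 with h | h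
      · exact absurd h hfac
      · exact h
    have hu0 : u = 0 := hzn n u hzu
    have : (f n : M) = 0 := by rw [← hyu, hu0, map_zero]
    exact DFinsupp.mem_support_iff.mp hmem (Subtype.ext this)
  intro f g hfg
  have := key (f - g) (by rw [map_sub, hfg, sub_self])
  exact sub_eq_zero.mp this
end

section
/- Assume in addition that z is bijective and that x acts locally nilpotently, i.e. for every m ∈ M there exists i with x^i(m) = 0. Then M decomposes as the internal direct sum M = ⊕_{j≥0} y^j(ker x); equivalently, the k-linear map from the direct sum of countably many copies of ker x to M sending a finitely supported family (v_j)_{j≥0} to Σ_{j≥0} y^j(v_j) is a linear isomorphism. -/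
set_option linter.unusedSectionVars false
section Aux

variable {k M : Type*} [Field k] [CharZero k] [AddCommGroup M] [Module k M]
variable (x y z : Module.End k M)

/-- the commutation identity `x yⁿ⁺¹ = yⁿ⁺¹ x + (n+1) z yⁿ`. -/
lemma stmt4_aux_comm (hxy : x * y - y * x = z) (hyz : y * z = z * y) (n : ℕ) :
    x * y ^ (n + 1) = y ^ (n + 1) * x + ((n : k) + 1) • (z * y ^ n) := by
  have hxy' : x * y = z + y * x := by rw [← hxy]; noncomm_ring
  induction n with
  | zero => simp [hxy', add_comm]
  | succ n ih =>
      have hcomm : y ^ (n + 1) * z = z * y ^ (n + 1) :=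
        ((Commute.pow_left (show Commute y z from hyz) (n + 1))).eq
      have : x * y ^ (n + 1 + 1) = (x * y ^ (n + 1)) * y := by
        rw [pow_succ, mul_assoc]
      rw [this, ih]
      push_cast
      rw [add_mul, smul_mul_assoc, mul_assoc, hxy', mul_add, hcomm,
        ← mul_assoc (y ^ (n + 1)) y x, ← pow_succ, mul_assoc z (y ^ n) y, ← pow_succ]
      module

/-- pointwise version on `ker x`. -/
lemma stmt4_aux_comm' (hxy : x * y - y * x = z) (hyz : y * z = z * y) (n : ℕ)
    (v : M) (hv : x v = 0) :
    x ((y ^ (n + 1)) v) = ((n : k) + 1) • z ((y ^ n) v) := by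
  have := congrArg (fun f : Module.End k M => f v) (stmt4_aux_comm x y z hxy hyz n)
  simpa [Module.End.mul_apply, hv] using this

lemma stmt4_aux_zpow (hyz : y * z = z * y) (n : ℕ) (v : M) :
    z ((y ^ n) v) = (y ^ n) (z v) := by
  have : z * y ^ n = y ^ n * z :=
    ((Commute.pow_left (show Commute y z from hyz) n)).eq.symm
  exact congrArg (fun f : Module.End k M => f v) this

/-- injectivity of finite sums `Σ yʲ vⱼ` with `vⱼ ∈ ker x`. -/
lemma stmt4_aux_inj (hxy : x * y - y * x = z) (hxz : x * z = z * x)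
    (hyz : y * z = z * y) (hz : Function.Injective z) :
    ∀ N : ℕ, ∀ v : ℕ → M, (∀ j, x (v j) = 0) → (∀ j, N ≤ j → v j = 0) →
      (∑ j ∈ Finset.range N, (y ^ j) (v j)) = 0 → ∀ j, v j = 0 := by
  intro N
  induction N with
  | zero => intro v _ h2 _ j; exact h2 j (Nat.zero_le j)
  | succ N ih =>
      intro v h1 h2 hsum j
      set v' : ℕ → M := fun j => ((j : k) + 1) • z (v (j + 1)) with hv'
      have h1' : ∀ j, x (v' j) = 0 := by
        intro j
        have : x (z (v (j + 1))) = z (x (v (j + 1))) :=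
          congrArg (fun f : Module.End k M => f (v (j + 1))) hxz
        simp [hv', map_smul, this, h1]
      have h2' : ∀ j, N ≤ j → v' j = 0 := by
        intro j hj
        simp [hv', h2 (j + 1) (by omega)]
      have hsum' : (∑ j ∈ Finset.range N, (y ^ j) (v' j)) = 0 := by
        have hx0 : x (∑ j ∈ Finset.range (N + 1), (y ^ j) (v j)) = 0 := by
          rw [hsum]; simp
        rw [map_sum, Finset.sum_range_succ'] at hx0
        simp only [pow_zero, Module.End.one_apply, h1, add_zero] at hx0
        rw [← hx0]
        apply Finset.sum_congr rfl
        intro i _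
        rw [stmt4_aux_comm' x y z hxy hyz i (v (i + 1)) (h1 (i + 1)),
          stmt4_aux_zpow y z hyz, ← map_smul]
      have hz' : ∀ j, v' j = 0 := ih v' h1' h2' hsum'
      have hsucc : ∀ j, v (j + 1) = 0 := by
        intro j
        have := hz' j
        rw [hv'] at this
        have hc : ((j : k) + 1) ≠ 0 := by
          have := Nat.cast_add_one_ne_zero (R := k) j
          push_cast at this
          exact this
        have : z (v (j + 1)) = 0 := by
          rcases smul_eq_zero.mp this with h | h
          · exact absurd h hc
          · exact h
        have h0 : z (v (j + 1)) = z 0 := by simpa using this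
        exact hz h0
      cases j with
      | zero =>
          rw [Finset.sum_range_succ'] at hsum
          simp only [hsucc, map_zero, Finset.sum_const_zero, zero_add, pow_zero,
            Module.End.one_apply] at hsum
          exact hsum
      | succ j => exact hsucc j

end Aux

/-- if `z` is bijective and `x` is locally nilpotent, then
`M = ⊕_{j ≥ 0} y^j (ker x)`: the linear map `⨁_{j : ℕ} ker x → M` sending a
finitely supported family `(v_j)` to `Σ_j y^j v_j` is a linear isomorphism. -/
theorem stmt4 {k M : Type*} [Field k] [CharZero k] [AddCommGroup M] [Module k M]
    (x y z : Module.End k M)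
    (hxy : x * y - y * x = z) (hxz : x * z = z * x) (hyz : y * z = z * y)
    (hz : Function.Bijective z)
    (hx : ∀ m : M, ∃ i : ℕ, (x ^ i) m = 0) :
    Function.Bijective
      (DirectSum.toModule k ℕ M
        (fun j : ℕ => (y ^ j) ∘ₗ (LinearMap.ker x).subtype) :
        DirectSum ℕ (fun _ : ℕ => ↥(LinearMap.ker x)) →ₗ[k] M) := by
  classical
  set φ : DirectSum ℕ (fun _ : ℕ => ↥(LinearMap.ker x)) →ₗ[k] M :=
    DirectSum.toModule k ℕ M (fun j : ℕ => (y ^ j) ∘ₗ (LinearMap.ker x).subtype) with hφ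
  -- the inverse of z
  set e : M ≃ₗ[k] M := LinearEquiv.ofBijective z hz with he
  have hze : ∀ m, z (e.symm m) = m := fun m => e.apply_symm_apply m
  have hxzinv : ∀ m, x (e.symm m) = e.symm (x m) := by
    intro m
    apply hz.1
    have h1 : z (x (e.symm m)) = x (z (e.symm m)) := by
      exact (congrArg (fun f : Module.End k M => f (e.symm m)) hxz).symm
    rw [h1, hze, hze]
  -- φ applied to d equals the sum over support
  have hφ_sum : ∀ d : DirectSum ℕ (fun _ : ℕ => ↥(LinearMap.ker x)),
      φ d = ∑ j ∈ DFinsupp.support d, (y ^ j) ((d j : M)) := by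
    intro d
    conv_lhs => rw [← DirectSum.sum_support_of d]
    rw [map_sum]
    apply Finset.sum_congr rfl
    intro j _
    rw [hφ, ← DirectSum.lof_eq_of k, DirectSum.toModule_lof]
    rfl
  constructor
  · -- injectivity
    rw [← LinearMap.ker_eq_bot]
    rw [Submodule.eq_bot_iff]
    intro d hd
    rw [LinearMap.mem_ker] at hd
    set N : ℕ := (DFinsupp.support d).sup id + 1 with hN
    have hsupp : DFinsupp.support d ⊆ Finset.range N := by
      intro j hj
      rw [Finset.mem_range, hN]
      exact Nat.lt_succ_of_le (Finset.le_sup (f := id) hj)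
    set v : ℕ → M := fun j => (d j : M) with hv
    have h1 : ∀ j, x (v j) = 0 := fun j => (d j).2
    have h2 : ∀ j, N ≤ j → v j = 0 := by
      intro j hj
      have : j ∉ DFinsupp.support d := fun hmem =>
        absurd (Finset.mem_range.mp (hsupp hmem)) (not_lt.mpr hj)
      rw [hv]
      simp [DFinsupp.notMem_support_iff.mp this]
    have hsum : (∑ j ∈ Finset.range N, (y ^ j) (v j)) = 0 := by
      rw [← Finset.sum_subset hsupp (fun j _ hj => by
        simp [hv, DFinsupp.notMem_support_iff.mp hj])]
      rw [← hφ_sum d]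
      exact hd
    have hall := stmt4_aux_inj x y z hxy hxz hyz hz.1 N v h1 h2 hsum
    refine DFinsupp.ext fun j => Subtype.ext ?_
    exact hall j
  · -- surjectivity
    rw [← LinearMap.range_eq_top]
    rw [eq_top_iff]
    intro m _
    obtain ⟨i, hi⟩ := hx m
    induction i generalizing m with
    | zero => simp at hi; simp [hi]
    | succ i ih =>
        have hxm : (x ^ i) (x m) = 0 := by
          rw [← Module.End.mul_apply, ← pow_succ]; exact hi
        obtain ⟨d, hd⟩ := ih Submodule.mem_top hxm
        -- define w j and m'
        set w : ℕ → M := fun j => ((j : k) + 1)⁻¹ • e.symm ((d j : M)) with hw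
        have hwker : ∀ j, x (w j) = 0 := by
          intro j
          rw [hw]
          simp only [map_smul, hxzinv]
          rw [(d j).2]
          simp
        set m' : M := ∑ j ∈ DFinsupp.support d, (y ^ (j + 1)) (w j) with hm'
        have hm'range : m' ∈ LinearMap.range φ := by
          rw [hm']
          apply Submodule.sum_mem
          intro j _
          exact ⟨DirectSum.lof k ℕ (fun _ => ↥(LinearMap.ker x)) (j + 1)
            ⟨w j, LinearMap.mem_ker.mpr (hwker j)⟩, by
              rw [hφ, DirectSum.toModule_lof]; rfl⟩
        have hxm' : x m' = x m := by
          rw [hm', map_sum]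
          have : ∀ j ∈ DFinsupp.support d, x ((y ^ (j + 1)) (w j)) = (y ^ j) ((d j : M)) := by
            intro j _
            rw [stmt4_aux_comm' x y z hxy hyz j (w j) (hwker j)]
            rw [stmt4_aux_zpow y z hyz]
            rw [hw]
            have hc : ((j : k) + 1) ≠ 0 := by
              have := Nat.cast_add_one_ne_zero (R := k) j
              push_cast at this
              exact this
            rw [map_smul, hze, map_smul, smul_smul, mul_inv_cancel₀ hc, one_smul]
          rw [Finset.sum_congr rfl this, ← hφ_sum d, hd]
        have hker : m - m' ∈ LinearMap.range φ := by
          refine ⟨DirectSum.lof k ℕ (fun _ => ↥(LinearMap.ker x)) 0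
            ⟨m - m', LinearMap.mem_ker.mpr ?_⟩, ?_⟩
          · rw [map_sub, hxm', sub_self]
          · rw [hφ, DirectSum.toModule_lof]; simp
        have := Submodule.add_mem _ hker hm'range
        simpa using this
end

section
/- For every 𝔷-module N on which z acts invertibly, the 𝔥-module G(N) = U(𝔥) ⊗_{U(𝔭)} E(N) lies in 𝓜_𝔩(𝔥)^×: every element of 𝔩 acts locally nilpotently on G(N) (i.e. for every X ∈ 𝔩 and every w ∈ G(N) there exists i with X^i·w = 0), and z acts invertibly on G(N). -/
open scoped TensorProduct

structure AltBilin (k V : Type*) [Field k] [AddCommGroup V] [Module k V] where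
  form : V →ₗ[k] V →ₗ[k] k
  alt : ∀ v : V, form v v = 0

variable {k V : Type*} [Field k] [AddCommGroup V] [Module k V]

def Heisenberg (ω : AltBilin k V) : Type _ := V × k

namespace Heisenberg
variable (ω : AltBilin k V)
instance : AddCommGroup (Heisenberg ω) := inferInstanceAs (AddCommGroup (V × k))
instance : Module k (Heisenberg ω) := inferInstanceAs (Module k (V × k))
instance : LieRing (Heisenberg ω) where
  bracket x y := (((0 : V), ω.form x.1 y.1) : V × k)
  add_lie x y z := by
    show (((0 : V), ω.form (x.1 + y.1) z.1) : V × k)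
      = ((0 : V), ω.form x.1 z.1) + ((0 : V), ω.form y.1 z.1)
    ext <;> simp
  lie_add x y z := by
    show (((0 : V), ω.form x.1 (y.1 + z.1)) : V × k)
      = ((0 : V), ω.form x.1 y.1) + ((0 : V), ω.form x.1 z.1)
    ext <;> simp
  lie_self x := by
    show (((0 : V), ω.form x.1 x.1) : V × k) = 0
    ext <;> simp [ω.alt]
  leibniz_lie x y z := by
    show (((0 : V), ω.form x.1 ((0 : V), ω.form y.1 z.1).1) : V × k)
      = (((0 : V), ω.form ((0 : V), ω.form x.1 y.1).1 z.1) : V × k)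
        + (((0 : V), ω.form y.1 ((0 : V), ω.form x.1 z.1).1) : V × k)
    ext <;> simp
instance : LieAlgebra k (Heisenberg ω) where
  lie_smul t x y := by
    show (((0 : V), ω.form x.1 (t • y).1) : V × k)
      = t • (((0 : V), ω.form x.1 y.1) : V × k)
    have h1 : (t • y).1 = t • y.1 := rfl
    ext <;> simp [h1]
def zH : Heisenberg ω := (((0 : V), (1 : k)) : V × k)
def ofV (v : V) : Heisenberg ω := ((v, (0 : k)) : V × k)
def ofVk (v : V) (c : k) : Heisenberg ω := ((v, c) : V × k)
end Heisenberg


section Defs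

variable (ω : AltBilin k V)
variable (N : Type*) [AddCommGroup N] [Module k N]

/-- The submodule of relations presenting `G(N) = U(𝔥) ⊗_{U(𝔭)} E(N)` as a
quotient of `U(𝔥) ⊗_k N`: it is spanned by the elements
`(u·ι(x,c)) ⊗ n − u ⊗ (c • ζ n)` for `x ∈ 𝔩`, `c ∈ k`, `n ∈ N`, where `ζ` is the
action of the central element `z` on the `𝔷`-module `N` and `𝔩` acts on `E(N)`
by zero. -/
noncomputable def relN (l : Submodule k V) (ζ : Module.End k N) :
    Submodule k (UniversalEnvelopingAlgebra k (Heisenberg ω) ⊗[k] N) :=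
  Submodule.span k
    {t | ∃ (u : UniversalEnvelopingAlgebra k (Heisenberg ω)) (x : V),
        x ∈ l ∧ ∃ (c : k) (n : N),
          t = (u * UniversalEnvelopingAlgebra.ι k (Heisenberg.ofVk ω x c)) ⊗ₜ[k] n
              - u ⊗ₜ[k] (c • ζ n)}

/-- Left multiplication by `ι(h)` on the first factor of `U(𝔥) ⊗_k N`; this
induces the `𝔥`-module structure on `G(N)`. -/
noncomputable def lmul (h : Heisenberg ω) :
    (UniversalEnvelopingAlgebra k (Heisenberg ω) ⊗[k] N) →ₗ[k]
      (UniversalEnvelopingAlgebra k (Heisenberg ω) ⊗[k] N) :=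
  TensorProduct.map (LinearMap.mulLeft k (UniversalEnvelopingAlgebra.ι k h)) LinearMap.id

end Defs

/-!
Since `𝔩` acts by zero on `E(N)`, every `(u * ι x) ⊗ n` with `x ∈ 𝔩` is a relation, so on the
class of `u ⊗ n` the element `x` acts as `ad (ι x)` does on `u`. As `𝔥` is two-step nilpotent,
`ad (ι x)` kills every `ι h` after two steps, and being a derivation it is then locally nilpotent
on all of `U(𝔥)`. The element `z` is central in `U(𝔥)`, so on the class of `u ⊗ n` it acts as
`1 ⊗ ζ` does; the latter is invertible and its inverse preserves the relations.
-/

section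

attribute [local instance 100] LieRing.ofAssociativeRing

open LieAlgebra TensorProduct

section AdLocallyNilpotent

variable {R A : Type*} [CommRing R] [Ring A] [Algebra R A]

theorem ad_pow_mul_eq_zero_of_add_le (a : A) :
    ∀ n i j (b c : A), i + j ≤ n → (ad R A a ^ i) b = 0 → (ad R A a ^ j) c = 0 →
      (ad R A a ^ n) (b * c) = 0
  | 0, i, j, b, c, hn, hb, _ => by
    obtain rfl : i = 0 := by omega
    simp_all
  | n + 1, 0, _, b, c, _, hb, _ => by simp_all
  | n + 1, _, 0, b, c, _, _, hc => by simp_all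
  | n + 1, i + 1, j + 1, b, c, hn, hb, hc => by
    have hleibniz : ad R A a (b * c) = ad R A a b * c + b * ad R A a c := by
      simp only [ad_apply, Ring.lie_def]; noncomm_ring
    rw [pow_succ, Module.End.mul_apply, hleibniz, map_add,
      ad_pow_mul_eq_zero_of_add_le a n i (j + 1) _ _ (by omega)
        (by rwa [← Module.End.mul_apply, ← pow_succ]) hc,
      ad_pow_mul_eq_zero_of_add_le a n (i + 1) j _ _ (by omega) hb
        (by rwa [← Module.End.mul_apply, ← pow_succ]), add_zero]

theorem exists_ad_pow_eq_zero_of_mem_adjoin {a : A} {s : Set A}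
    (hs : ∀ b ∈ s, ∃ i, (ad R A a ^ i) b = 0) {b : A} (hb : b ∈ Algebra.adjoin R s) :
    ∃ i, (ad R A a ^ i) b = 0 := by
  induction hb using Algebra.adjoin_induction with
  | mem b hb => exact hs b hb
  | algebraMap r => exact ⟨1, by simp [Ring.lie_def, Algebra.commutes]⟩
  | add b c _ _ hb hc =>
    obtain ⟨i, hb⟩ := hb
    obtain ⟨j, hc⟩ := hc
    refine ⟨max i j, ?_⟩
    rw [map_add, Module.End.pow_map_zero_of_le (le_max_left i j) hb,
      Module.End.pow_map_zero_of_le (le_max_right i j) hc, add_zero]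
  | mul b c _ _ hb hc =>
    obtain ⟨i, hb⟩ := hb
    obtain ⟨j, hc⟩ := hc
    exact ⟨i + j, ad_pow_mul_eq_zero_of_add_le a _ i j b c le_rfl hb hc⟩

end AdLocallyNilpotent

namespace UniversalEnvelopingAlgebra

variable {R L : Type*} [CommRing R] [LieRing L] [LieAlgebra R L]

theorem adjoin_range_ι : Algebra.adjoin R (Set.range (ι R : L → _)) = ⊤ := by
  have hsurj : Function.Surjective (mkAlgHom R L) := RingCon.mkₐ_surjective _
  have hrange : Set.range (ι R : L → _) = mkAlgHom R L '' Set.range (TensorAlgebra.ι R) := by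
    rw [← Set.range_comp]; rfl
  rw [hrange, ← AlgHom.map_adjoin, TensorAlgebra.adjoin_range_ι, Algebra.map_top,
    (mkAlgHom R L).range_eq_top.mpr hsurj]

theorem commute_ι_of_forall_lie_eq_zero {x : L} (hx : ∀ y : L, ⁅x, y⁆ = 0)
    (u : UniversalEnvelopingAlgebra R L) : Commute (ι R x) u := by
  refine Algebra.commute_of_mem_adjoin_of_forall_mem_commute
    (by rw [adjoin_range_ι]; exact Algebra.mem_top) ?_
  rintro _ ⟨y, rfl⟩
  rw [commute_iff_lie_eq, ← LieHom.map_lie, hx, map_zero]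

theorem exists_ad_ι_pow_eq_zero {x : L} (hx : ∀ y : L, ⁅x, ⁅x, y⁆⁆ = 0)
    (u : UniversalEnvelopingAlgebra R L) : ∃ i, (ad R _ (ι R x) ^ i) u = 0 := by
  refine exists_ad_pow_eq_zero_of_mem_adjoin ?_ (by rw [adjoin_range_ι]; exact Algebra.mem_top)
  rintro _ ⟨y, rfl⟩
  exact ⟨2, by simp only [pow_two, Module.End.mul_apply, ad_apply, ← LieHom.map_lie, hx,
    map_zero]⟩

end UniversalEnvelopingAlgebra

namespace Heisenberg

variable (ω : AltBilin k V)

theorem ofVk_zero (x : V) : ofVk ω x 0 = ofV ω x :=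
  rfl

theorem ofVk_zero_one : ofVk ω 0 1 = zH ω :=
  rfl

theorem lie_lie_eq_zero (a b c : Heisenberg ω) : ⁅a, ⁅b, c⁆⁆ = 0 :=
  show (((0 : V), ω.form a.1 0) : V × k) = 0 by simp

theorem zH_lie (a : Heisenberg ω) : ⁅zH ω, a⁆ = 0 :=
  show (((0 : V), ω.form 0 a.1) : V × k) = 0 by simp

end Heisenberg

section TensorModuloRelations

variable {R A M : Type*} [CommRing R] [Ring A] [Algebra R A] [AddCommGroup M] [Module R M]

theorem rTensor_mulLeft_tmul_sub_ad_tmul (a u : A) (m : M) :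
    LinearMap.rTensor M (LinearMap.mulLeft R a) (u ⊗ₜ m) - ad R A a u ⊗ₜ m = (u * a) ⊗ₜ m := by
  rw [LinearMap.rTensor_tmul, LinearMap.mulLeft_apply, ad_apply, Ring.lie_def, ← sub_tmul,
    sub_sub_cancel]

theorem exists_pow_rTensor_mulLeft_mem {P : Submodule R (A ⊗[R] M)} {a : A}
    (hP : Set.MapsTo (LinearMap.rTensor M (LinearMap.mulLeft R a)) P P)
    (hright : ∀ u m, (u * a) ⊗ₜ[R] m ∈ P) (hnil : ∀ u, ∃ i, (ad R A a ^ i) u = 0)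
    (t : A ⊗[R] M) : ∃ i, (LinearMap.rTensor M (LinearMap.mulLeft R a) ^ i) t ∈ P := by
  set f := LinearMap.rTensor M (LinearMap.mulLeft R a)
  have hpow_le {i j : ℕ} (hij : i ≤ j) {t : A ⊗[R] M} (ht : (f ^ i) t ∈ P) : (f ^ j) t ∈ P := by
    rw [← Nat.sub_add_cancel hij, pow_add, Module.End.mul_apply, Module.End.coe_pow]
    exact hP.iterate _ ht
  have hpow_tmul (i : ℕ) (u : A) (m : M) : (f ^ i) (u ⊗ₜ m) - (ad R A a ^ i) u ⊗ₜ m ∈ P := by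
    induction i with
    | zero => simp
    | succ i ih =>
      have hsplit : (f ^ (i + 1)) (u ⊗ₜ m) - (ad R A a ^ (i + 1)) u ⊗ₜ m
          = f ((f ^ i) (u ⊗ₜ m) - (ad R A a ^ i) u ⊗ₜ m)
            + (f ((ad R A a ^ i) u ⊗ₜ m) - ad R A a ((ad R A a ^ i) u) ⊗ₜ m) := by
        rw [pow_succ', pow_succ', Module.End.mul_apply, Module.End.mul_apply, map_sub]
        abel
      rw [hsplit, rTensor_mulLeft_tmul_sub_ad_tmul]
      exact P.add_mem (hP ih) (hright _ m)
  induction t using TensorProduct.induction_on with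
  | zero => exact ⟨0, by simp⟩
  | tmul u m =>
    obtain ⟨i, hi⟩ := hnil u
    exact ⟨i, by simpa [hi] using hpow_tmul i u m⟩
  | add t t' ht ht' =>
    obtain ⟨i, ht⟩ := ht
    obtain ⟨j, ht'⟩ := ht'
    exact ⟨max i j, by
      rw [map_add]; exact P.add_mem (hpow_le (le_max_left i j) ht) (hpow_le (le_max_right i j) ht')⟩

end TensorModuloRelations

namespace Submodule

variable {R X : Type*} [CommRing R] [AddCommGroup X] [Module R X] {P : Submodule R X}
  {f : Module.End R X} {e : X ≃ₗ[R] X}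

theorem mem_of_apply_mem_of_forall_sub_mem (hP : Set.MapsTo e.symm P P)
    (hfe : ∀ t, f t - e t ∈ P) {t : X} (ht : f t ∈ P) : t ∈ P := by
  have het : e t ∈ P := by simpa using P.sub_mem ht (hfe t)
  simpa using hP het

theorem exists_sub_apply_mem_of_forall_sub_mem (hfe : ∀ t, f t - e t ∈ P) (t : X) :
    ∃ t', t - f t' ∈ P :=
  ⟨e.symm t, by simpa using P.neg_mem (hfe (e.symm t))⟩

end Submodule

section Relations

open UniversalEnvelopingAlgebra Heisenberg

variable (ω : AltBilin k V) {N : Type*} [AddCommGroup N] [Module k N] (l : Submodule k V)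
  (ζ : Module.End k N)

theorem lmul_eq_rTensor (h : Heisenberg ω) :
    lmul ω N h = LinearMap.rTensor N (LinearMap.mulLeft k (ι k h)) :=
  rfl

theorem mul_ofVk_tmul_sub_mem_relN (u : UniversalEnvelopingAlgebra k (Heisenberg ω)) {x : V}
    (hx : x ∈ l) (c : k) (n : N) :
    (u * ι k (ofVk ω x c)) ⊗ₜ[k] n - u ⊗ₜ[k] (c • ζ n) ∈ relN ω N l ζ :=
  Submodule.subset_span ⟨u, x, hx, c, n, rfl⟩

theorem mul_ofV_tmul_mem_relN (u : UniversalEnvelopingAlgebra k (Heisenberg ω)) {x : V}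
    (hx : x ∈ l) (n : N) : (u * ι k (ofV ω x)) ⊗ₜ[k] n ∈ relN ω N l ζ := by
  simpa only [ofVk_zero, zero_smul, tmul_zero, sub_zero] using
    mul_ofVk_tmul_sub_mem_relN ω l ζ u hx 0 n

theorem mul_zH_tmul_sub_mem_relN (u : UniversalEnvelopingAlgebra k (Heisenberg ω)) (n : N) :
    (u * ι k (zH ω)) ⊗ₜ[k] n - u ⊗ₜ[k] ζ n ∈ relN ω N l ζ := by
  simpa only [ofVk_zero_one, one_smul] using mul_ofVk_tmul_sub_mem_relN ω l ζ u l.zero_mem 1 n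

theorem relN_mapsTo_rTensor_mulLeft (w : UniversalEnvelopingAlgebra k (Heisenberg ω)) :
    Set.MapsTo (LinearMap.rTensor N (LinearMap.mulLeft k w)) (relN ω N l ζ) (relN ω N l ζ) := by
  refine fun t ht ↦ (Submodule.span_le (p := (relN ω N l ζ).comap _)).mpr ?_ ht
  rintro _ ⟨u, x, hx, c, n, rfl⟩
  simpa [mul_assoc] using mul_ofVk_tmul_sub_mem_relN ω l ζ (w * u) hx c n

theorem relN_mapsTo_lTensor {φ : Module.End k N} (hφ : Commute φ ζ) :
    Set.MapsTo (LinearMap.lTensor (UniversalEnvelopingAlgebra k (Heisenberg ω)) φ)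
      (relN ω N l ζ) (relN ω N l ζ) := by
  refine fun t ht ↦ (Submodule.span_le (p := (relN ω N l ζ).comap _)).mpr ?_ ht
  rintro _ ⟨u, x, hx, c, n, rfl⟩
  simpa [← Module.End.mul_apply, hφ.eq] using mul_ofVk_tmul_sub_mem_relN ω l ζ u hx c (φ n)

theorem lmul_zH_sub_lTensor_mem_relN (t : UniversalEnvelopingAlgebra k (Heisenberg ω) ⊗[k] N) :
    lmul ω N (zH ω) t - LinearMap.lTensor _ ζ t ∈ relN ω N l ζ := by
  induction t using TensorProduct.induction_on with
  | zero => simp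
  | tmul u n =>
    rw [lmul_eq_rTensor, LinearMap.rTensor_tmul, LinearMap.lTensor_tmul, LinearMap.mulLeft_apply,
      (commute_ι_of_forall_lie_eq_zero (zH_lie ω) u).eq]
    exact mul_zH_tmul_sub_mem_relN ω l ζ u n
  | add t t' ht ht' => simpa [add_sub_add_comm] using (relN ω N l ζ).add_mem ht ht'

end Relations

end

theorem stmt7_general {k V : Type*} [Field k] [AddCommGroup V] [Module k V]
    (ω : AltBilin k V)
    (l : Submodule k V)
    (N : Type*) [AddCommGroup N] [Module k N]
    (ζ : Module.End k N) (hζ : Function.Bijective ζ) :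
    (∀ (h : Heisenberg ω), ∀ t ∈ relN ω N l ζ, lmul ω N h t ∈ relN ω N l ζ)
    ∧ (∀ x ∈ l, ∀ t : UniversalEnvelopingAlgebra k (Heisenberg ω) ⊗[k] N,
        ∃ i : ℕ, ((lmul ω N (Heisenberg.ofV ω x)) ^ i) t ∈ relN ω N l ζ)
    ∧ (∀ t : UniversalEnvelopingAlgebra k (Heisenberg ω) ⊗[k] N,
        lmul ω N (Heisenberg.zH ω) t ∈ relN ω N l ζ → t ∈ relN ω N l ζ)
    ∧ (∀ t : UniversalEnvelopingAlgebra k (Heisenberg ω) ⊗[k] N,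
        ∃ t' : UniversalEnvelopingAlgebra k (Heisenberg ω) ⊗[k] N,
          t - lmul ω N (Heisenberg.zH ω) t' ∈ relN ω N l ζ) := by
  set ζ' := LinearEquiv.ofBijective ζ hζ
  set e := LinearEquiv.lTensor (UniversalEnvelopingAlgebra k (Heisenberg ω)) ζ'
  have hlmul_zH : ∀ t, lmul ω N (Heisenberg.zH ω) t - e t ∈ relN ω N l ζ :=
    lmul_zH_sub_lTensor_mem_relN ω l ζ
  have hcomm : Commute (ζ'.symm : Module.End k N) ζ := LinearMap.ext fun n ↦
    show ζ'.symm (ζ' n) = ζ' (ζ'.symm n) by rw [ζ'.symm_apply_apply, ζ'.apply_symm_apply]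
  have he_symm : Set.MapsTo e.symm (relN ω N l ζ) (relN ω N l ζ) :=
    relN_mapsTo_lTensor ω l ζ hcomm
  refine ⟨fun h ↦ relN_mapsTo_rTensor_mulLeft ω l ζ _, fun x hx t ↦ ?_,
    fun t ↦ Submodule.mem_of_apply_mem_of_forall_sub_mem he_symm hlmul_zH,
    Submodule.exists_sub_apply_mem_of_forall_sub_mem hlmul_zH⟩
  exact exists_pow_rTensor_mulLeft_mem (relN_mapsTo_rTensor_mulLeft ω l ζ _)
    (fun u n ↦ mul_ofV_tmul_mem_relN ω l ζ u hx n)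
    (UniversalEnvelopingAlgebra.exists_ad_ι_pow_eq_zero (Heisenberg.lie_lie_eq_zero ω _ _)) t

/-- for every `𝔷`-module `N` on which `z` acts invertibly (with
action `ζ`), the `𝔥`-module `G(N) = U(𝔥) ⊗_{U(𝔭)} E(N)` lies in `𝓜_𝔩(𝔥)^×`.
Here `G(N)` is presented as the quotient of `U(𝔥) ⊗_k N` by the relation
submodule `relN`, on which `h ∈ 𝔥` acts via left multiplication `lmul`.
The claims are: the relation submodule is stable under the `𝔥`-action (so the
action descends to the quotient); every element of `𝔩` acts locally nilpotently
on the quotient; and the central element `z` acts injectively and surjectively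
(hence invertibly) on the quotient. -/
theorem stmt7 {k V : Type*} [Field k] [CharZero k] [AddCommGroup V] [Module k V]
    [FiniteDimensional k V] (ω : AltBilin k V)
    (hnondeg : ∀ v : V, (∀ w : V, ω.form v w = 0) → v = 0)
    (l : Submodule k V) (hLag : ∀ v : V, v ∈ l ↔ ∀ x ∈ l, ω.form v x = 0)
    (N : Type*) [AddCommGroup N] [Module k N]
    (ζ : Module.End k N) (hζ : Function.Bijective ζ) :
    (∀ (h : Heisenberg ω), ∀ t ∈ relN ω N l ζ, lmul ω N h t ∈ relN ω N l ζ)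
    ∧ (∀ x ∈ l, ∀ t : UniversalEnvelopingAlgebra k (Heisenberg ω) ⊗[k] N,
        ∃ i : ℕ, ((lmul ω N (Heisenberg.ofV ω x)) ^ i) t ∈ relN ω N l ζ)
    ∧ (∀ t : UniversalEnvelopingAlgebra k (Heisenberg ω) ⊗[k] N,
        lmul ω N (Heisenberg.zH ω) t ∈ relN ω N l ζ → t ∈ relN ω N l ζ)
    ∧ (∀ t : UniversalEnvelopingAlgebra k (Heisenberg ω) ⊗[k] N,
        ∃ t' : UniversalEnvelopingAlgebra k (Heisenberg ω) ⊗[k] N,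
          t - lmul ω N (Heisenberg.zH ω) t' ∈ relN ω N l ζ) :=
  stmt7_general ω l N ζ hζ
end

section
/- The subspace K_∞ := ∩_{i≥0} K_i is a 𝔤-submodule of M, i.e. Y·K_∞ ⊆ K_∞ for every Y ∈ 𝔤; consequently the quotient M_{(𝔫,χ)} := M / K_∞ carries a natural 𝔤-module structure extending the induced 𝔫-action. -/
/-!
By Engel's theorem, `𝔤` is a nilpotent `𝔫`-module, so every `Y ∈ 𝔤` lies in some term of the
upper central series of `𝔤` as an `𝔫`-module. Since
`Z (X - χ X) m = (X - χ X) Z m - [X, Z] m`, an element `Z` of the `s`-th term of that series maps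
`K_{i+s}` into `K_i` for all `i`. Hence `Y` preserves `K_∞`.
-/

variable {k : Type*} [Field k] [CharZero k]
variable {L : Type*} [LieRing L] [LieAlgebra k L]

/-- The descending sequence of subspaces `K_0 = M`,
`K_{i+1} = span { X·m − χ(X)·m : X ∈ 𝔫, m ∈ K_i }`. -/
def Kseq (M : Type*) [AddCommGroup M] [Module k M] [LieRingModule L M]
    (n : LieSubalgebra k L) (χ : n →ₗ[k] k) : ℕ → Submodule k M
  | 0 => ⊤
  | i + 1 => Submodule.span k
      {w : M | ∃ X : n, ∃ m ∈ Kseq M n χ i, w = ⁅(X : L), m⁆ - χ X • m}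

theorem LieSubalgebra.isNilpotent_of_forall_isNilpotent_ad {R A : Type*} [CommRing R]
    [LieRing A] [LieAlgebra R A] [IsNoetherian R A] (n : LieSubalgebra R A)
    (hnil : ∀ X ∈ n, IsNilpotent (LieAlgebra.ad R A X)) :
    LieModule.IsNilpotent n A :=
  LieAlgebra.isEngelian_of_isNoetherian (R := R) A fun X => hnil X X.2

theorem lie_lie_sub_smul {R A V : Type*} [CommRing R] [LieRing A] [LieAlgebra R A]
    [AddCommGroup V] [Module R V] [LieRingModule A V] [LieModule R A V]
    (Z X : A) (c : R) (m : V) :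
    ⁅Z, ⁅X, m⁆ - c • m⁆ = (⁅X, ⁅Z, m⁆⁆ - c • ⁅Z, m⁆) - ⁅⁅X, Z⁆, m⁆ := by
  rw [lie_sub, lie_smul, leibniz_lie Z X m, ← lie_skew X Z, neg_lie]
  abel

section Kseq

variable {R A : Type*} [Field R] [LieRing A] [LieAlgebra R A]
  (M : Type*) [AddCommGroup M] [Module R M] [LieRingModule A M]
  (n : LieSubalgebra R A) (χ : n →ₗ[R] R)

theorem lie_sub_smul_mem_Kseq_succ {i : ℕ} (X : n) {m : M} (hm : m ∈ Kseq M n χ i) :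
    ⁅(X : A), m⁆ - χ X • m ∈ Kseq M n χ (i + 1) :=
  Submodule.subset_span ⟨X, m, hm, rfl⟩

def LowersKseq (Z : A) (s : ℕ) : Prop :=
  ∀ i, ∀ m ∈ Kseq M n χ (i + s), ⁅Z, m⁆ ∈ Kseq M n χ i

variable {M n χ} [LieModule R A M]

theorem lowersKseq_succ {Z : A} {s : ℕ} (h : ∀ X : n, LowersKseq M n χ ⁅(X : A), Z⁆ s) :
    LowersKseq M n χ Z (s + 1) := by
  intro i
  induction i with
  | zero => simp [Kseq]
  | succ i ih =>
    intro m hm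
    induction hm using Submodule.span_induction with
    | mem w hw =>
      obtain ⟨X, m, hm, rfl⟩ := hw
      have hm' : m ∈ Kseq M n χ (i + (s + 1)) := by
        rwa [show i + (s + 1) = i + 1 + s by omega]
      rw [lie_lie_sub_smul]
      exact Submodule.sub_mem _ (lie_sub_smul_mem_Kseq_succ M n χ X (ih m hm')) (h X (i + 1) m hm)
    | zero => simp
    | add x y _ _ hx hy => rw [lie_add]; exact Submodule.add_mem _ hx hy
    | smul c x _ hx => rw [lie_smul]; exact Submodule.smul_mem _ c hx

theorem lowersKseq_of_mem_ucs {Z : A} {s : ℕ} (hZ : Z ∈ (⊥ : LieSubmodule R n A).ucs s) :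
    LowersKseq M n χ Z s := by
  induction s generalizing Z with
  | zero =>
    obtain rfl : Z = 0 := hZ
    simp [LowersKseq]
  | succ s ih =>
    rw [LieSubmodule.ucs_succ, LieSubmodule.mem_normalizer] at hZ
    exact lowersKseq_succ fun X => ih (hZ X)

end Kseq

theorem stmt8_general [FiniteDimensional k L]
    (M : Type*) [AddCommGroup M] [Module k M] [LieRingModule L M] [LieModule k L M]
    (n : LieSubalgebra k L)
    (hnil : ∀ X : L, X ∈ n → IsNilpotent ((LieAlgebra.ad k L) X))
    (χ : n →ₗ[k] k)
    (Y : L) (m : M) (hm : m ∈ ⨅ i : ℕ, Kseq (k := k) (L := L) M n χ i) :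
    ⁅Y, m⁆ ∈ ⨅ i : ℕ, Kseq (k := k) (L := L) M n χ i := by
  have : LieModule.IsNilpotent n L := n.isNilpotent_of_forall_isNilpotent_ad hnil
  obtain ⟨r, hr⟩ := (LieModule.isNilpotent_iff_exists_ucs_eq_top (R := k) (L := n) (M := L)).mp this
  have hY : LowersKseq M n χ Y r := lowersKseq_of_mem_ucs (by simp [hr])
  rw [Submodule.mem_iInf] at hm ⊢
  exact fun i => hY i m (hm (i + r))

/-- if `ad X` is nilpotent on `𝔤` for every `X ∈ 𝔫` and `χ` is a
character of `𝔫`, then `K_∞ = ⋂_i K_i` is a `𝔤`-submodule of `M`. -/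
theorem stmt8 [FiniteDimensional k L]
    (M : Type*) [AddCommGroup M] [Module k M] [LieRingModule L M] [LieModule k L M]
    (n : LieSubalgebra k L)
    (hnil : ∀ X : L, X ∈ n → IsNilpotent ((LieAlgebra.ad k L) X))
    (χ : n →ₗ[k] k) (hχ : ∀ X Y : n, χ ⁅X, Y⁆ = 0)
    (Y : L) (m : M) (hm : m ∈ ⨅ i : ℕ, Kseq (k := k) (L := L) M n χ i) :
    ⁅Y, m⁆ ∈ ⨅ i : ℕ, Kseq (k := k) (L := L) M n χ i :=
  stmt8_general M n hnil χ Y m hm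
end

section
/- Define the operator T on 𝒮(ℝ,ℂ) ⊕ 𝒮(ℝ,ℂ) ⊕ 𝒮(ℝ,ℂ) by T(f, g, h) = (ℱ^{−1}f + E(ℱ^{−1}g) + ((E² − E)/2)(ℱ^{−1}h), ℱ^{−1}g + E(ℱ^{−1}h), ℱ^{−1}h), i.e. T is the upper-triangular matrix operator [[1, E, (E²−E)/2],[0, 1, E],[0, 0, 1]] composed with the componentwise inverse Fourier transform. Then T²(f, g, h) = (f∘ν, g∘ν, h∘ν), where ν(x) = −x; that is, T² equals componentwise reflection. (This verifies the Fourier inversion relation for the generalized Weil representation attached to the 3-dimensional representation of the center given by the second-order Taylor expansion of e^{2πist} at s = 1.) -/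
open Real Complex

/-- The symmetrized Euler operator `(E f)(x) = x f'(x) + f(x)/2`. -/
noncomputable def Eop (f : ℝ → ℂ) : ℝ → ℂ :=
  fun x => (x : ℂ) * deriv f x + f x / 2

/-- The operator `(E² − E)/2`. -/
noncomputable def E2op (f : ℝ → ℂ) : ℝ → ℂ :=
  fun x => (Eop (Eop f) x - Eop f x) / 2

/-- The operator `T(f, g, h) = (ℱ⁻¹f + E(ℱ⁻¹g) + ((E²−E)/2)(ℱ⁻¹h), ℱ⁻¹g + E(ℱ⁻¹h), ℱ⁻¹h)`,
i.e. the matrix operator `[[1, E, (E²−E)/2], [0, 1, E], [0, 0, 1]]` composed with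
the componentwise inverse Fourier transform. -/
noncomputable def Tmat3 :
    (ℝ → ℂ) × (ℝ → ℂ) × (ℝ → ℂ) → (ℝ → ℂ) × (ℝ → ℂ) × (ℝ → ℂ) :=
  fun p =>
    (FourierTransformInv.fourierInv p.1 + Eop (FourierTransformInv.fourierInv p.2.1)
        + E2op (FourierTransformInv.fourierInv p.2.2),
      FourierTransformInv.fourierInv p.2.1 + Eop (FourierTransformInv.fourierInv p.2.2),
      FourierTransformInv.fourierInv p.2.2)

/- ### Auxiliary material -/

open MeasureTheory SchwartzMap
open scoped FourierTransform

lemma fourierAdd {f g : ℝ → ℂ} (hf : Integrable f) (hg : Integrable g) :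
    𝓕 (f + g) = 𝓕 f + 𝓕 g :=
  VectorFourier.fourierIntegral_add Real.continuous_fourierChar
    (by exact continuous_inner) hf hg

lemma fourierConstMul (c : ℂ) (f : ℝ → ℂ) :
    𝓕 (fun x => c * f x) = fun ξ => c * 𝓕 f ξ := by
  have h := VectorFourier.fourierIntegral_const_smul (𝕜 := ℝ) 𝐞
    (volume : Measure ℝ) (innerₗ ℝ) f c
  funext ξ
  have h2 : 𝓕 (fun x => c * f x) ξ
      = VectorFourier.fourierIntegral 𝐞 volume (innerₗ ℝ) (c • f) ξ := rfl
  rw [h2, h]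
  rfl

/-- Multiplication by `x`, as a continuous linear map on Schwartz space. -/
noncomputable def mulX : 𝓢(ℝ, ℂ) →L[ℝ] 𝓢(ℝ, ℂ) :=
  SchwartzMap.bilinLeftCLM (ContinuousLinearMap.lsmul ℝ ℝ : ℝ →L[ℝ] ℂ →L[ℝ] ℂ).flip
    (ContinuousLinearMap.id ℝ ℝ).hasTemperateGrowth

lemma mulX_apply (f : 𝓢(ℝ, ℂ)) (x : ℝ) : mulX f x = (x : ℂ) * f x := by
  show x • f x = (x : ℂ) * f x
  rw [Complex.real_smul]

set_option synthInstance.maxHeartbeats 1000000 in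
/-- The symmetrized Euler operator, as a continuous linear map on Schwartz space. -/
noncomputable def ESL : 𝓢(ℝ, ℂ) →L[ℝ] 𝓢(ℝ, ℂ) :=
  mulX.comp (SchwartzMap.derivCLM ℝ ℂ) + (2⁻¹ : ℝ) • ContinuousLinearMap.id ℝ 𝓢(ℝ, ℂ)

lemma ESL_coe (f : 𝓢(ℝ, ℂ)) : ⇑(ESL f) = Eop ⇑f := by
  funext x
  simp only [ESL, ContinuousLinearMap.add_apply, ContinuousLinearMap.comp_apply,
    ContinuousLinearMap.smul_apply, ContinuousLinearMap.id_apply, SchwartzMap.add_apply,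
    SchwartzMap.smul_apply, mulX_apply, SchwartzMap.derivCLM_apply, Eop]
  rw [Complex.real_smul]
  push_cast
  ring

set_option synthInstance.maxHeartbeats 1000000 in
/-- The operator `(E² − E)/2` on Schwartz space. -/
noncomputable def E2SL : 𝓢(ℝ, ℂ) →L[ℝ] 𝓢(ℝ, ℂ) :=
  (2⁻¹ : ℝ) • (ESL.comp ESL - ESL)

lemma E2SL_eq (u : 𝓢(ℝ, ℂ)) : E2SL u = (2⁻¹ : ℝ) • (ESL (ESL u) - ESL u) := by
  simp [E2SL]

lemma E2SL_coe (u : 𝓢(ℝ, ℂ)) : ⇑(E2SL u) = E2op ⇑u := by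
  funext x
  rw [E2SL_eq]
  simp only [SchwartzMap.smul_apply, SchwartzMap.sub_apply, E2op]
  rw [← ESL_coe, ← ESL_coe]
  rw [Complex.real_smul]
  push_cast
  ring

/-- Anticommutation of the Fourier transform with the symmetrized Euler operator. -/
lemma fourier_Eop (f : 𝓢(ℝ, ℂ)) :
    𝓕 (Eop ⇑f) = fun ξ => -Eop (𝓕 ⇑f) ξ := by
  have hderiv : deriv (⇑f) = ⇑(SchwartzMap.derivCLM ℝ ℂ f) :=
    funext fun x => (SchwartzMap.derivCLM_apply ℝ f x).symm
  have hint_d : Integrable (deriv ⇑f) := hderiv ▸ (SchwartzMap.derivCLM ℝ ℂ f).integrable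
  have hmul : (fun x : ℝ => (x : ℂ) * deriv ⇑f x) = ⇑(mulX (SchwartzMap.derivCLM ℝ ℂ f)) := by
    funext x; rw [mulX_apply, hderiv]
  have hint_xd : Integrable (fun x : ℝ => (x : ℂ) * deriv ⇑f x) :=
    hmul ▸ (mulX (SchwartzMap.derivCLM ℝ ℂ f)).integrable
  have hint_xd' : Integrable (fun x : ℝ => x • deriv ⇑f x) := by
    have : (fun x : ℝ => x • deriv ⇑f x) = fun x : ℝ => (x : ℂ) * deriv ⇑f x := by
      funext x; rw [Complex.real_smul]
    rw [this]; exact hint_xd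
  set F : ℝ → ℂ := 𝓕 ⇑f with hFdef
  have hFc : F = ⇑(SchwartzMap.fourierTransformCLM ℝ f) := by
    rw [hFdef, SchwartzMap.fourierTransformCLM_apply]; rfl
  have hFdiff : Differentiable ℝ F := by
    rw [hFc]; exact (SchwartzMap.fourierTransformCLM ℝ f).differentiable
  have hA : 𝓕 (deriv ⇑f) = fun ξ : ℝ => (2 * π * I * ξ) • F ξ :=
    Real.fourier_deriv f.integrable f.differentiable hint_d
  have hB : deriv (𝓕 (deriv ⇑f)) = 𝓕 (fun x : ℝ => (-2 * π * I * x) • deriv ⇑f x) :=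
    Real.deriv_fourier hint_d hint_xd'
  have hC : ∀ ξ : ℝ, deriv (fun ξ : ℝ => (2 * π * I * ξ) • F ξ) ξ
      = (2 * π * I) * F ξ + (2 * π * I * ξ) * deriv F ξ := by
    intro ξ
    have h1 : HasDerivAt (fun ξ : ℝ => ((2 * π * I * ξ : ℂ))) (2 * π * I) ξ := by
      have := (Complex.ofRealCLM.hasDerivAt (x := ξ)).const_mul (2 * π * I)
      simpa using this
    have h2 : HasDerivAt F (deriv F ξ) ξ := (hFdiff ξ).hasDerivAt
    have := (h1.mul h2).deriv
    simp only [smul_eq_mul]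
    exact this
  have hD : 𝓕 (fun x : ℝ => (-2 * π * I * x) • deriv ⇑f x)
      = fun ξ => (-(2 * π * I)) * 𝓕 (fun x : ℝ => (x : ℂ) * deriv ⇑f x) ξ := by
    have e : (fun x : ℝ => (-2 * π * I * x) • deriv ⇑f x)
        = fun x : ℝ => (-(2 * π * I)) * ((x : ℂ) * deriv ⇑f x) := by
      funext x; simp only [smul_eq_mul]; ring
    rw [e, fourierConstMul]
  have h2pi : (2 * π * I : ℂ) ≠ 0 := by
    simp [Real.pi_ne_zero, Complex.I_ne_zero, Complex.ofReal_ne_zero]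
  funext ξ
  have hEop : Eop ⇑f = (fun x : ℝ => (x : ℂ) * deriv ⇑f x) + fun x => (2⁻¹ : ℂ) * f x := by
    funext x; simp only [Eop, Pi.add_apply]; ring
  rw [hEop, fourierAdd hint_xd (f.integrable.const_mul _)]
  have hhalf : 𝓕 (fun x => (2⁻¹ : ℂ) * ⇑f x) = fun ξ => (2⁻¹ : ℂ) * F ξ :=
    fourierConstMul _ _
  have hxd : 𝓕 (fun x : ℝ => (x : ℂ) * deriv ⇑f x) ξ
      = -(F ξ + ξ * deriv F ξ) := by
    have e1 : (-(2 * π * I)) * 𝓕 (fun x : ℝ => (x : ℂ) * deriv ⇑f x) ξ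
        = (2 * π * I) * F ξ + (2 * π * I * ξ) * deriv F ξ := by
      rw [← congrFun hD ξ, ← congrFun hB ξ, hA, hC]
    have h2 : (-(2 * π * I)) * 𝓕 (fun x : ℝ => (x : ℂ) * deriv ⇑f x) ξ
        = (-(2 * π * I)) * (-(F ξ + ξ * deriv F ξ)) := by
      linear_combination e1
    exact mul_left_cancel₀ (neg_ne_zero.mpr h2pi) h2
  simp only [Pi.add_apply, hxd, hhalf, Eop]
  ring

/-- Anticommutation of the inverse Fourier transform with the Euler operator. -/
lemma ift_Eop (f : 𝓢(ℝ, ℂ)) :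
    𝓕⁻ (Eop ⇑f) = fun x => -Eop (𝓕⁻ ⇑f) x := by
  have hneg : 𝓕⁻ ⇑f = fun t => 𝓕 ⇑f (-t) :=
    funext fun t => Real.fourierInv_eq_fourier_neg ⇑f t
  funext x
  rw [hneg, Real.fourierInv_eq_fourier_neg, fourier_Eop]
  simp only [Eop]
  rw [deriv_comp_neg]
  push_cast
  ring

/-- The inverse Fourier transform as a continuous linear equivalence on Schwartz space. -/
noncomputable def IFT : 𝓢(ℝ, ℂ) ≃L[ℝ] 𝓢(ℝ, ℂ) :=
  (FourierTransform.fourierCLE ℝ 𝓢(ℝ, ℂ)).symm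

lemma IFT_coe (f : 𝓢(ℝ, ℂ)) : ⇑(IFT f) = 𝓕⁻ ⇑f :=
  SchwartzMap.fourierInv_coe f

lemma ift_ESL (f : 𝓢(ℝ, ℂ)) : IFT (ESL f) = -(ESL (IFT f)) := by
  ext x
  rw [show (⇑(IFT (ESL f)) : ℝ → ℂ) = 𝓕⁻ ⇑(ESL f) from IFT_coe _, ESL_coe f, ift_Eop]
  show -Eop (𝓕⁻ ⇑f) x = -(ESL (IFT f) x)
  rw [← IFT_coe f, ← ESL_coe]

lemma ift_ESL_ESL (f : 𝓢(ℝ, ℂ)) : IFT (ESL (ESL f)) = ESL (ESL (IFT f)) := by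
  rw [ift_ESL, ift_ESL, map_neg, neg_neg]

lemma ift_ift (f : 𝓢(ℝ, ℂ)) : ⇑(IFT (IFT f)) = fun x => f (-x) := by
  have hint : Integrable (𝓕 ⇑f) := by
    show Integrable ⇑(SchwartzMap.fourierTransformCLM ℝ f)
    exact (SchwartzMap.fourierTransformCLM ℝ f).integrable
  have hinv : 𝓕 (𝓕⁻ ⇑f) = ⇑f :=
    Continuous.fourier_fourierInv_eq f.continuous f.integrable hint
  funext x
  rw [show (⇑(IFT (IFT f)) : ℝ → ℂ) = 𝓕⁻ ⇑(IFT f) from IFT_coe _, IFT_coe f,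
    Real.fourierInv_eq_fourier_neg, hinv]

lemma Tmat3_schwartz (F G H : 𝓢(ℝ, ℂ)) :
    Tmat3 (⇑F, ⇑G, ⇑H)
      = (⇑(IFT F + ESL (IFT G) + E2SL (IFT H)), ⇑(IFT G + ESL (IFT H)), ⇑(IFT H)) := by
  have c1 : FourierTransformInv.fourierInv ⇑F = ⇑(IFT F) := (IFT_coe F).symm
  have c2 : FourierTransformInv.fourierInv ⇑G = ⇑(IFT G) := (IFT_coe G).symm
  have c3 : FourierTransformInv.fourierInv ⇑H = ⇑(IFT H) := (IFT_coe H).symm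
  simp only [Tmat3, c1, c2, c3, ← ESL_coe, ← E2SL_coe]
  refine Prod.ext ?_ (Prod.ext ?_ rfl)
  · funext x
    simp [SchwartzMap.add_apply]
  · funext x
    simp [SchwartzMap.add_apply]

/-- `T² (f, g, h) = (f ∘ ν, g ∘ ν, h ∘ ν)` with `ν(x) = −x`, i.e.
`T²` is componentwise reflection, for Schwartz `f`, `g`, `h`. -/
theorem stmt12 (f g h : SchwartzMap ℝ ℂ) :
    Tmat3 (Tmat3 (⇑f, ⇑g, ⇑h))
      = ((fun x => f (-x)), (fun x => g (-x)), (fun x => h (-x))) := by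
  rw [Tmat3_schwartz f g h, Tmat3_schwartz]
  have h1 : IFT (IFT f + ESL (IFT g) + E2SL (IFT h))
      + ESL (IFT (IFT g + ESL (IFT h))) + E2SL (IFT (IFT h)) = IFT (IFT f) := by
    simp only [E2SL_eq, map_add, _root_.map_smul, map_sub, map_neg, ift_ESL, ift_ESL_ESL]
    module
  have h2 : IFT (IFT g + ESL (IFT h)) + ESL (IFT (IFT h)) = IFT (IFT g) := by
    simp only [map_add, ift_ESL]
    module
  rw [h1, h2, ift_ift, ift_ift, ift_ift]
end
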